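/- Under the proportional redistribution update z'_k = z_k + η·C·π(k) for k ≠ y_err and z'_{y_err} = z_{y_err} − η·C·(1 − π(y_err)), the softmax probability of y_err strictly decreases: π'(y_err) < π(y_err). -/
import Mathlib


noncomputable def softmax {V : Type*} [Fintype V] (z : V → ℝ) (y : V) : ℝ :=
  Real.exp (z y) / ∑ k, Real.exp (z k)

/-- Under the proportional redistribution update `z' k = z k + η·C·π(k)` for
`k ≠ y_err` and `z' y_err = z y_err − η·C·(1 − π(y_err))`, the softmax probability of
the error token strictly decreases. -/
theorem error_prob_decreases {V : Type*} [Fintype V] [DecidableEq V]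
    (hcard : 2 ≤ Fintype.card V)
    (z : V → ℝ) (yerr : V) (η C : ℝ) (hη : 0 < η) (hC : 0 < C)
    (hpos : 0 < softmax z yerr) (hlt : softmax z yerr < 1)
    (z' : V → ℝ)
    (hz' : z' = fun k => if k = yerr
      then z yerr - η * C * (1 - softmax z yerr)
      else z k + η * C * softmax z k) :
    softmax z' yerr < softmax z yerr := by
  classical
  have hne : Nonempty V := Fintype.card_pos_iff.mp (by omega)
  have huniv : (Finset.univ : Finset V).Nonempty := Finset.univ_nonempty
  set d : ℝ := η * C * (1 - softmax z yerr) with hd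
  have hd0 : 0 < d := mul_pos (mul_pos hη hC) (by linarith)
  have hS : 0 < ∑ k, Real.exp (z k) :=
    Finset.sum_pos (fun k _ => Real.exp_pos _) huniv
  have hS' : 0 < ∑ k, Real.exp (z' k) :=
    Finset.sum_pos (fun k _ => Real.exp_pos _) huniv
  have hsm_pos : ∀ k : V, 0 < softmax z k := fun k => div_pos (Real.exp_pos _) hS
  have hEy : Finset.univ.Nonempty := huniv
  have hVy : (Finset.univ.erase yerr).Nonempty := by
    apply Finset.card_pos.mp
    rw [Finset.card_erase_of_mem (Finset.mem_univ _), Finset.card_univ]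
    omega
  -- split sums
  have hsplitS : (∑ k, Real.exp (z k))
      = Real.exp (z yerr) + ∑ k ∈ Finset.univ.erase yerr, Real.exp (z k) :=
    (Finset.add_sum_erase _ _ (Finset.mem_univ yerr)).symm
  have hz'y : z' yerr = z yerr - d := by rw [hz']; simp
  have hz'k : ∀ k ∈ Finset.univ.erase yerr, z' k = z k + η * C * softmax z k := by
    intro k hk
    rw [hz']
    simp [Finset.ne_of_mem_erase hk]
  have hsplitS' : (∑ k, Real.exp (z' k))
      = Real.exp (z yerr - d) + ∑ k ∈ Finset.univ.erase yerr,
          Real.exp (z k + η * C * softmax z k) := by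
    rw [← Finset.add_sum_erase _ _ (Finset.mem_univ yerr), hz'y]
    congr 1
    exact Finset.sum_congr rfl (fun k hk => by rw [hz'k k hk])
  -- key sum inequality
  have hkey : Real.exp (-d) * ∑ k ∈ Finset.univ.erase yerr, Real.exp (z k)
      < ∑ k ∈ Finset.univ.erase yerr, Real.exp (z k + η * C * softmax z k) := by
    rw [Finset.mul_sum]
    apply Finset.sum_lt_sum_of_nonempty hVy
    intro k hk
    rw [Real.exp_add]
    have h1 : Real.exp (-d) < 1 := Real.exp_lt_one_iff.mpr (by linarith)
    have h2 : (1:ℝ) < Real.exp (η * C * softmax z k) := by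
      have := mul_pos (mul_pos hη hC) (hsm_pos k)
      calc (1:ℝ) = Real.exp 0 := Real.exp_zero.symm
        _ < _ := Real.exp_lt_exp.mpr this
    nlinarith [Real.exp_pos (z k)]
  -- conclude
  show Real.exp (z' yerr) / _ < Real.exp (z yerr) / _
  rw [div_lt_div_iff₀ hS' hS]
  have hexp : Real.exp (z yerr - d) = Real.exp (z yerr) * Real.exp (-d) := by
    rw [← Real.exp_add]; ring_nf
  rw [hz'y, hsplitS, hsplitS', hexp]
  have hey := Real.exp_pos (z yerr)
  nlinarith [hkey, hey]
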